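/- arXiv:2405.03533 — 2 statements merged into one kernel-verified Lean document; each statement's English description precedes it below -/
import Mathlib

section
/- Let (M, ω) be a pre-symplectic manifold, A a Lie algebroid over M with connection ∇, and μ ∈ Γ(A*). The map ρ_A − (∇μ)*: A → TM ⊕ T*M takes values in the Dirac structure L_ω = Gr(ω♭) and is a Lie algebroid morphism A → L_ω if and only if μ satisfies condition (S2): (∇μ)(e) = −ι_{ρ(e)} ω for all sections e of A. -/
/-!
Algebraic model of differential geometry:
* functions `C^∞(M)` = a commutative ℝ-algebra `C`,
* vector fields = derivations of `C`,
* 1-forms = `C`-valued functions on vector fields,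
* 2-forms = `C`-valued skew functions of two vector fields,
* a bivector field is encoded by its sharp map `π♯ : Ω¹ → 𝔛`, with
  `π(α,β) = ⟨π♯ α, β⟩ = β (π♯ α)`.
-/

/-- Vector fields on `M`, modelled as derivations of the algebra of functions. -/
abbrev VF (C : Type) [CommRing C] [Algebra ℝ C] := Derivation ℝ C C

/-- 1-forms on `M`, modelled as `C`-valued functions on vector fields. -/
abbrev Form (C : Type) [CommRing C] [Algebra ℝ C] := VF C → C

/-- A Lie algebroid over `M`, with module of sections `A`, anchor `ρ : A → TM`. -/
structure LieAlgebroid (C : Type) [CommRing C] [Algebra ℝ C] (A : Type)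
    [AddCommGroup A] [Module C A] where
  bra : A → A → A
  anchor : A →ₗ[C] VF C
  bra_add_left : ∀ a b c : A, bra (a + b) c = bra a c + bra b c
  bra_skew : ∀ a b : A, bra a b = - bra b a
  jacobi : ∀ a b c : A, bra a (bra b c) = bra (bra a b) c + bra b (bra a c)
  leibniz : ∀ (a b : A) (f : C), bra a (f • b) = f • bra a b + (anchor a f) • b
  anchor_bra : ∀ a b : A, anchor (bra a b) = ⁅anchor a, anchor b⁆

/-- A vector-bundle connection `∇` on `A`. -/
structure Conn (C : Type) [CommRing C] [Algebra ℝ C] (A : Type)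
    [AddCommGroup A] [Module C A] where
  cov : VF C → A → A
  add_vf : ∀ u v a, cov (u + v) a = cov u a + cov v a
  smul_vf : ∀ (f : C) u a, cov (f • u) a = f • cov u a
  add_sec : ∀ u a b, cov u (a + b) = cov u a + cov u b
  leibniz : ∀ u (f : C) a, cov u (f • a) = f • cov u a + (u f) • a

variable {C : Type} [CommRing C] [Algebra ℝ C]

/-- Exterior derivative of a function. -/
def dd (f : C) : Form C := fun u => u f

/-- Lie derivative of a 1-form. -/
def lieD (u : VF C) (α : Form C) : Form C := fun v => u (α v) - α ⁅u, v⁆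

/-- Exterior derivative of a 1-form: `dα(v,w)`. -/
def dOne (α : Form C) (v w : VF C) : C := v (α w) - w (α v) - α ⁅v, w⁆

/-- Exterior derivative of a 2-form: `dω(u,v,w)`. -/
def dTwo (ω : VF C → VF C → C) (u v w : VF C) : C :=
  u (ω v w) - v (ω u w) + w (ω u v) - ω ⁅u, v⁆ w + ω ⁅u, w⁆ v - ω ⁅v, w⁆ u

/-- `ω` is skew-symmetric. -/
def IsSkew (ω : VF C → VF C → C) : Prop := ∀ u v, ω u v = - ω v u

/-- `ω` is a closed 2-form: `dω = 0`. -/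
def IsClosed2 (ω : VF C → VF C → C) : Prop := ∀ u v w, dTwo ω u v w = 0

/-- The bivector pairing `π(α,β) = ⟨π♯ α, β⟩`. -/
def pi2 (sharp : Form C →ₗ[C] VF C) (α β : Form C) : C := β (sharp α)

/-- Skew-symmetry of the bivector `π`. -/
def SharpSkew (sharp : Form C →ₗ[C] VF C) : Prop :=
  ∀ α β : Form C, α (sharp β) = - β (sharp α)

/-- The Koszul bracket `[α,β]_π = L_{π♯α}β − L_{π♯β}α − d(π(α,β))`. -/
def kos (sharp : Form C →ₗ[C] VF C) (α β : Form C) : Form C :=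
  fun v => lieD (sharp α) β v - lieD (sharp β) α v - dd (pi2 sharp α β) v

/-- The bracket `{f,g} = π(df,dg)` of functions. -/
def pbr (sharp : Form C →ₗ[C] VF C) (f g : C) : C := pi2 sharp (dd f) (dd g)

/-- `[π,π]_S = 0`, i.e. `π` is Poisson, expressed as the Jacobi identity of
the induced bracket of functions. -/
def SchoutenZero (sharp : Form C →ₗ[C] VF C) : Prop :=
  ∀ f g h : C,
    pbr sharp f (pbr sharp g h) + pbr sharp g (pbr sharp h f)
      + pbr sharp h (pbr sharp f g) = 0

/-- The bracket of the Almeida–Molino Lie algebroid `TM ⊕ ℝ` over a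
pre-symplectic manifold: `[u+f, v+g] = [u,v] + u g − v f − ι_u ι_v ω`. -/
def amBr (ω : VF C → VF C → C) (p q : VF C × C) : VF C × C :=
  (⁅p.1, q.1⁆, p.1 q.2 - q.1 p.2 - ω q.1 p.1)

/-- The bracket on `T*M ⊕ ℝ` over a Poisson manifold:
`[α+f, β+g] = [α,β]_π − π♯(α) g + π♯(β) f − π(α,β)`. -/
def pBr (sharp : Form C →ₗ[C] VF C) (p q : Form C × C) : Form C × C :=
  (kos sharp p.1 q.1, - sharp p.1 q.2 + sharp q.1 p.2 - pi2 sharp p.1 q.1)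

/-- The Dorfman bracket on `TM ⊕ T*M` (with `H = 0`):
`[u+α, v+β] = [u,v] + L_u β − ι_v dα`. -/
def dorf (p q : VF C × Form C) : VF C × Form C :=
  (⁅p.1, q.1⁆, fun w => lieD p.1 q.2 w - dOne p.2 q.1 w)

/-- The symmetric pairing `⟨u+α, v+β⟩ = ι_u β + ι_v α` on `TM ⊕ T*M`. -/
def cpair (p q : VF C × Form C) : C := q.2 p.1 + p.2 q.1

/-- `ω♭ : TM → T*M`, `ω♭(u)(v) = ω(u,v)`. -/
def omegaFlat (ω : VF C → VF C → C) (u : VF C) : Form C := fun v => ω u v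

variable {A : Type} [AddCommGroup A] [Module C A]

/-- `(∇μ)(e)` as a 1-form: `v ↦ v⟨μ,e⟩ − ⟨μ, ∇_v e⟩` (dual connection). -/
def nm (D : Conn C A) (μ : A →ₗ[C] C) (e : A) : Form C :=
  fun v => v (μ e) - μ (D.cov v e)

/-- The `A`-torsion `ᴬT(e₁,e₂) = ∇_{ρ e₁} e₂ − ∇_{ρ e₂} e₁ − [e₁,e₂]`. -/
def ator (L : LieAlgebroid C A) (D : Conn C A) (e₁ e₂ : A) : A :=
  D.cov (L.anchor e₁) e₂ - D.cov (L.anchor e₂) e₁ - L.bra e₁ e₂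

/-- The basic curvature `ᴬS`, contracted with a vector field `v`:
`ι_v ᴬS(e₁,e₂) = [e₁, ∇_v e₂] − [e₂, ∇_v e₁] − ∇_v [e₁,e₂]
 − ∇_{ρ(∇_v e₁)} e₂ + ∇_{ρ(∇_v e₂)} e₁`. -/
def bS (L : LieAlgebroid C A) (D : Conn C A) (v : VF C) (e₁ e₂ : A) : A :=
  L.bra e₁ (D.cov v e₂) - L.bra e₂ (D.cov v e₁) - D.cov v (L.bra e₁ e₂)
    - D.cov (L.anchor (D.cov v e₁)) e₂ + D.cov (L.anchor (D.cov v e₂)) e₁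

/-- The basic `A`-connection on 1-forms:
`ᴬ∇_e α = L_{ρ e} α + ⟨ρ(∇ e), α⟩`. -/
def anabla (L : LieAlgebroid C A) (D : Conn C A) (e : A) (α : Form C) : Form C :=
  fun v => lieD (L.anchor e) α v + α (L.anchor (D.cov v e))

/-- The Lie algebroid differential of `μ ∈ Γ(A*)`:
`(ᴬdμ)(e₁,e₂) = ρ(e₁)⟨μ,e₂⟩ − ρ(e₂)⟨μ,e₁⟩ − ⟨μ,[e₁,e₂]⟩`. -/
def admu (L : LieAlgebroid C A) (μ : A →ₗ[C] C) (e₁ e₂ : A) : C :=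
  L.anchor e₁ (μ e₂) - L.anchor e₂ (μ e₁) - μ (L.bra e₁ e₂)

/-- (P1): `A` is Poisson anchored, `ᴬ∇π = 0` for the basic `A`-connection. -/
def P1 (L : LieAlgebroid C A) (D : Conn C A) (sharp : Form C →ₗ[C] VF C) : Prop :=
  ∀ (e : A) (α β : Form C),
    L.anchor e (pi2 sharp α β) - pi2 sharp (anabla L D e α) β
      - pi2 sharp α (anabla L D e β) = 0

/-- (P2): `μ` is a `∇`-momentum section, `ρ(e) = −π♯((∇μ)(e))`. -/
def P2 (L : LieAlgebroid C A) (D : Conn C A) (sharp : Form C →ₗ[C] VF C)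
    (μ : A →ₗ[C] C) : Prop :=
  ∀ e : A, L.anchor e = - sharp (nm D μ e)

/-- (P3): `μ` is bracket-compatible, `(ᴬdμ)(e₁,e₂) = −π((∇μ)(e₁),(∇μ)(e₂))`. -/
def P3 (L : LieAlgebroid C A) (D : Conn C A) (sharp : Form C →ₗ[C] VF C)
    (μ : A →ₗ[C] C) : Prop :=
  ∀ e₁ e₂ : A, admu L μ e₁ e₂ = - pi2 sharp (nm D μ e₁) (nm D μ e₂)

/-- The fiberwise-linear (Lie–Poisson) bracket on functions on `A*`,
restricted to affine functions `f + a`, `f ∈ C^∞(M)`, `a ∈ Γ(A)`: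
`{f,g} = 0`, `{a,g} = ρ(a) g`, `{a,b} = [a,b]`. -/
def lpBr (L : LieAlgebroid C A) (p q : C × A) : C × A :=
  (L.anchor p.2 q.1 - L.anchor q.2 p.1, L.bra p.2 q.2)
/-!
Condition (S2) says precisely that `ρ_A − (∇μ)*` takes values in the graph of `ω♭`. The bracket
condition then comes for free: by Cartan calculus, `dω = 0` makes the graph of `ω♭` closed under
the Dorfman bracket, `[u + ι_u ω, v + ι_v ω] = [u,v] + ι_{[u,v]} ω`, and `ρ` preserves brackets.
-/

theorem neg_eq_omegaFlat_iff (ω : VF C → VF C → C) (α : Form C) (u : VF C) :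
    -α = omegaFlat ω u ↔ ∀ v, α v = -ω u v := by
  simp only [funext_iff, Pi.neg_apply, omegaFlat, neg_eq_iff_eq_neg]

theorem dorf_omegaFlat {ω : VF C → VF C → C} (hskew : IsSkew ω) (hclosed : IsClosed2 ω)
    (u v : VF C) :
    dorf (u, omegaFlat ω u) (v, omegaFlat ω v) = (⁅u, v⁆, omegaFlat ω ⁅u, v⁆) := by
  refine Prod.ext rfl (funext fun w => ?_)
  have hdω := hclosed u v w
  simp only [dTwo] at hdω
  simp only [dorf, lieD, dOne, omegaFlat]
  linear_combination hdω - hskew v ⁅u, w⁆ + hskew u ⁅v, w⁆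

/-- `ρ_A − (∇μ)* : A → TM ⊕ T*M` takes values in the Dirac
structure `L_ω = Gr(ω♭)` and is a Lie algebroid morphism `A → L_ω` iff `μ`
satisfies (S2): `(∇μ)(e) = −ι_{ρ(e)} ω`. -/
theorem anchor_minus_nm_into_graph_iff_S2
    (L : LieAlgebroid C A) (D : Conn C A)
    (ω : VF C → VF C → C) (hskew : IsSkew ω) (hclosed : IsClosed2 ω)
    (μ : A →ₗ[C] C) :
    ((∀ e : A, - nm D μ e = omegaFlat ω (L.anchor e))
      ∧ (∀ e₁ e₂ : A,
          dorf (L.anchor e₁, - nm D μ e₁) (L.anchor e₂, - nm D μ e₂)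
            = (L.anchor (L.bra e₁ e₂), - nm D μ (L.bra e₁ e₂))))
    ↔ (∀ (e : A) (v : VF C), nm D μ e v = - ω (L.anchor e) v) := by
  simp only [← neg_eq_omegaFlat_iff]
  refine ⟨And.left, fun hgraph => ⟨hgraph, fun e₁ e₂ => ?_⟩⟩
  rw [hgraph, hgraph, hgraph, dorf_omegaFlat hskew hclosed, L.anchor_bra]
end

section
/- The fiberwise-linear bracket on the dual A* of a Lie algebroid A, defined by {f,g} = 0, {a,g} = ρ(a)g, {a,b} = [a,b]_A for f,g ∈ C∞(M) and a,b ∈ Γ(A) (viewed as fiberwise-linear functions on A*), extended by the Leibniz rule, satisfies the Jacobi identity, i.e., defines a Poisson algebra structure on the algebra generated by C∞(M) and Γ(A). -/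
variable {C : Type} [CommRing C] [Algebra ℝ C]

variable {A : Type} [AddCommGroup A] [Module C A]

theorem Derivation.cyclic_sum_commutator_apply_sub {R B : Type*} [CommRing R] [CommRing B]
    [Algebra R B] (X Y Z : Derivation R B B) (f g h : B) :
    ⁅X, Y⁆ h - Z (X g - Y f) + (⁅Y, Z⁆ f - X (Y h - Z g))
      + (⁅Z, X⁆ g - Y (Z f - X h)) = 0 := by
  simp only [Derivation.commutator_apply, map_sub]
  abel

namespace LieAlgebroid

variable (L : LieAlgebroid C A)

def braRight (c : A) : A →+ A :=
  AddMonoidHom.mk' (fun a => L.bra a c) fun a b => L.bra_add_left a b c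

theorem bra_neg_left (a b : A) : L.bra (-a) b = -L.bra a b :=
  (L.braRight b).map_neg a

theorem bra_neg_right (a b : A) : L.bra a (-b) = -L.bra a b := by
  rw [L.bra_skew, L.bra_neg_left, L.bra_skew b a, neg_neg]

theorem bra_bra_cyclic (a b c : A) :
    L.bra (L.bra a b) c + L.bra (L.bra b c) a + L.bra (L.bra c a) b = 0 := by
  rw [L.bra_skew (L.bra b c), L.bra_skew (L.bra c a), L.bra_skew c a, L.bra_neg_right,
    L.jacobi a b c]
  abel

end LieAlgebroid

/-- the fiberwise-linear bracket on functions on `A*`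
(`{f,g} = 0`, `{a,g} = ρ(a) g`, `{a,b} = [a,b]`), restricted to the affine
functions `C^∞(M) ⊕ Γ(A)` that generate the algebra, satisfies the Jacobi
identity. -/
theorem lie_poisson_jacobi
    (L : LieAlgebroid C A) :
    ∀ p q r : C × A,
      lpBr L (lpBr L p q) r + lpBr L (lpBr L q r) p
        + lpBr L (lpBr L r p) q = 0 := by
  rintro ⟨f, a⟩ ⟨g, b⟩ ⟨h, c⟩
  refine Prod.ext ?_ (L.bra_bra_cyclic a b c)
  simpa only [lpBr, Prod.fst_add, Prod.fst_zero, L.anchor_bra] using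
    Derivation.cyclic_sum_commutator_apply_sub (L.anchor a) (L.anchor b) (L.anchor c) f g h
end
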